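/- In the Artin braid group B_4, with Ω = σ2 σ3 σ1^{−1} σ2^{−1}, the identity Ω^2 · [σ2 Ω^{−1} σ2^{−1}, σ2 σ3^2 σ2^{−1}] = 1 holds, where [a,b] = a b a^{−1} b^{−1}. -/

import Mathlib

/-!
Only the defining relations of B₄ are used, so the identity holds for any three elements
`x y z` of a group with `xyx = yxy`, `yzy = zyz`, `xz = zx`. After conjugating by `y`, the word
collapses to `1` using the conjugation rules `x⁻¹yx = yxy⁻¹`, `xyx⁻¹ = y⁻¹xy`,
`y⁻¹z²y = zy²z⁻¹` (all from the braid relations) and `x⁻¹zx = z`.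
-/

/-- Defining relations of the Artin braid group with `m` generators
(braid group on `m+1` strands): the braid and the commuting relations. -/
def braidRels (m : ℕ) : Set (FreeGroup (Fin m)) :=
  { r | (∃ i j : Fin m, (i : ℕ) + 1 = (j : ℕ) ∧
          r = FreeGroup.of i * FreeGroup.of j * FreeGroup.of i *
              (FreeGroup.of j)⁻¹ * (FreeGroup.of i)⁻¹ * (FreeGroup.of j)⁻¹) ∨
        (∃ i j : Fin m, (i : ℕ) + 2 ≤ (j : ℕ) ∧
          r = FreeGroup.of i * FreeGroup.of j * (FreeGroup.of i)⁻¹ * (FreeGroup.of j)⁻¹) }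

/-- The Artin braid group with `m` generators σ₁,…,σ_m (on `m+1` strands). -/
abbrev Braid (m : ℕ) : Type := PresentedGroup (braidRels m)

/-- The generator σ_{i+1} (0-based index `i`). -/
def sigmaB {m : ℕ} (i : Fin m) : Braid m := PresentedGroup.of i

/-- The generator with 0-based natural-number index (junk value `1` out of range). -/
def sigma' {m : ℕ} (k : ℕ) : Braid m := if h : k < m then sigmaB ⟨k, h⟩ else 1

/-- The Garside half-twist Δ = (σ₁⋯σ_m)(σ₁⋯σ_{m-1})⋯(σ₁σ₂)(σ₁). -/
def garside (m : ℕ) : Braid m :=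
  (((List.range m).reverse).map
    (fun n => ((List.range (n + 1)).map (fun t => (sigma' t : Braid m))).prod)).prod

/-- The pure braid generator A_{i,j} = σ_{j-1}⋯σ_{i+1} σ_i² σ_{i+1}⁻¹⋯σ_{j-1}⁻¹
(1-based strand indices `i < j`). -/
def Abr {m : ℕ} (i j : ℕ) : Braid m :=
  (((List.range' i (j - 1 - i)).reverse.map (fun t => (sigma' t : Braid m))).prod) *
    ((sigma' (i - 1) : Braid m)) ^ 2 *
    (((List.range' i (j - 1 - i)).reverse.map (fun t => (sigma' t : Braid m))).prod)⁻¹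

/-- The braid Ω = σ₂σ₃σ₁⁻¹σ₂⁻¹ in B₄. -/
def OmegaB : Braid 3 := sigma' 1 * sigma' 2 * (sigma' 0)⁻¹ * (sigma' 1)⁻¹

open scoped commutatorElement

lemma sigmaB_braid {m : ℕ} {i j : Fin m} (h : (i : ℕ) + 1 = j) :
    sigmaB i * sigmaB j * sigmaB i = sigmaB j * sigmaB i * sigmaB j := by
  have := PresentedGroup.mk_eq_mk_of_mul_inv_mem (rels := braidRels m)
    (x := .of i * .of j * .of i) (y := .of j * .of i * .of j) (Or.inl ⟨i, j, h, by group⟩)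
  simp only [map_mul] at this
  exact this

lemma sigmaB_comm {m : ℕ} {i j : Fin m} (h : (i : ℕ) + 2 ≤ j) :
    sigmaB i * sigmaB j = sigmaB j * sigmaB i := by
  have := PresentedGroup.mk_eq_mk_of_mul_inv_mem (rels := braidRels m)
    (x := .of i * .of j) (y := .of j * .of i) (Or.inr ⟨i, j, h, by group⟩)
  simp only [map_mul] at this
  exact this

lemma sigma'_of_lt {m k : ℕ} (h : k < m) : (sigma' k : Braid m) = sigmaB ⟨k, h⟩ := dif_pos h

lemma sigma'_braid {m i : ℕ} (h : i + 1 < m) :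
    (sigma' i * sigma' (i + 1) * sigma' i : Braid m) =
      sigma' (i + 1) * sigma' i * sigma' (i + 1) := by
  rw [sigma'_of_lt h, sigma'_of_lt (by omega : i < m)]
  exact sigmaB_braid rfl

lemma sigma'_comm {m i j : ℕ} (hij : i + 2 ≤ j) (hj : j < m) :
    (sigma' i * sigma' j : Braid m) = sigma' j * sigma' i := by
  rw [sigma'_of_lt hj, sigma'_of_lt (by omega : i < m)]
  exact sigmaB_comm hij

section BraidRelation

variable {G : Type*} [Group G] {a b : G}

lemma inv_mul_mul_eq_of_braid (h : a * b * a = b * a * b) : a⁻¹ * b * a = b * a * b⁻¹ :=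
  calc a⁻¹ * b * a = a⁻¹ * (b * a * b) * b⁻¹ := by group
    _ = b * a * b⁻¹ := by rw [← h]; group

lemma mul_mul_inv_eq_of_braid (h : a * b * a = b * a * b) : a * b * a⁻¹ = b⁻¹ * a * b :=
  calc a * b * a⁻¹ = b⁻¹ * (b * a * b) * a⁻¹ := by group
    _ = b⁻¹ * a * b := by rw [← h]; group

end BraidRelation

theorem braid_omega_sq_mul_commutator_eq_one {G : Type*} [Group G] {x y z : G}
    (hxy : x * y * x = y * x * y) (hyz : y * z * y = z * y * z) (hxz : x * z = z * x) :
    (y * z * x⁻¹ * y⁻¹) ^ 2 * ⁅y * (y * z * x⁻¹ * y⁻¹)⁻¹ * y⁻¹, y * z ^ 2 * y⁻¹⁆ = 1 := by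
  have hz_sq : y⁻¹ * z ^ 2 * y = z * y ^ 2 * z⁻¹ :=
    calc y⁻¹ * z ^ 2 * y = (y⁻¹ * z * y) ^ 2 := by simp only [sq]; group
      _ = z * y ^ 2 * z⁻¹ := by rw [inv_mul_mul_eq_of_braid hyz]; simp only [sq]; group
  have hz : x⁻¹ * z * x = z := by rw [mul_assoc, ← hxz]; group
  rw [commutatorElement_def]
  calc _ = y * (z * x⁻¹ * z * (x⁻¹ * y * x) * z⁻¹ * (y⁻¹ * z ^ 2 * y) * z * x⁻¹ * y⁻¹
          * z⁻¹ ^ 2) * y⁻¹ := by simp only [sq]; group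
    _ = y * (z * x⁻¹ * z * y * (x * y * x⁻¹) * y⁻¹ * z⁻¹ ^ 2) * y⁻¹ := by
          rw [inv_mul_mul_eq_of_braid hxy, hz_sq]; group
    _ = y * (z * (x⁻¹ * z * x) * z⁻¹ ^ 2) * y⁻¹ := by rw [mul_mul_inv_eq_of_braid hxy]; group
    _ = 1 := by rw [hz]; group

/-- In B₄, Ω² · [σ₂ Ω⁻¹ σ₂⁻¹, σ₂ σ₃² σ₂⁻¹] = 1. -/
theorem stmt3 :
    OmegaB ^ 2 *
      ⁅sigma' 1 * OmegaB⁻¹ * (sigma' 1)⁻¹, sigma' 1 * (sigma' 2 : Braid 3) ^ 2 * (sigma' 1)⁻¹⁆ =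
      (1 : Braid 3) :=
  braid_omega_sq_mul_commutator_eq_one (sigma'_braid (by norm_num)) (sigma'_braid (by norm_num))
    (sigma'_comm le_rfl (by norm_num))
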